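/- Let ξ_n = ⌊log log n⌋ and λ_m = ∏_{j=1}^{m−1}(1 − j/n). Then for every fixed real t, ∏_{m=2}^{ξ_n} (1 − λ_m)e^{it/n} / (1 − λ_m e^{it/n}) → ∏_{m=2}^∞ C(m,2)/(C(m,2) − it) as n → ∞. -/

import Mathlib

/-!
The `m`-th factor is the characteristic function at `t / n` of a geometric law whose success
probability `p = 1 - λ_m` satisfies `S / (1 + S) ≤ p ≤ S` with `S = C(m,2) / n`, by the Weierstrass
product inequalities. Since `C(m,2) / (C(m,2) - it) = S / (S - i t/n)` is the characteristic
function of an exponential law at the same rescaled point, a second order expansion of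
`exp (i t/n)` shows that each factor is within `O((t² + |t|) / n)` of its limit, uniformly in
`m ≤ √n`. All factors have modulus at most `1`, so the two products over `2 ≤ m ≤ ξ_n` differ by
`O(ξ_n / n) = O(log n / n)`, while the limiting partial products tend to `L` because `ξ_n → ∞`.
-/

open Filter Finset Complex

theorem Finset.norm_prod_sub_prod_le_sum {ι R : Type*} [NormedCommRing R] [NormOneClass R]
    (s : Finset ι) {a b : ι → R} (ha : ∀ i ∈ s, ‖a i‖ ≤ 1) (hb : ∀ i ∈ s, ‖b i‖ ≤ 1) :
    ‖∏ i ∈ s, a i - ∏ i ∈ s, b i‖ ≤ ∑ i ∈ s, ‖a i - b i‖ := by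
  classical
  induction s using Finset.induction_on with
  | empty => simp
  | insert i s hi ih =>
    rw [prod_insert hi, prod_insert hi, sum_insert hi]
    have hA : ‖∏ j ∈ s, a j‖ ≤ 1 :=
      (norm_prod_le _ _).trans (prod_le_one (fun _ _ => norm_nonneg _)
        fun j hj => ha j (mem_insert_of_mem hj))
    have ih' := ih (fun j hj => ha j (mem_insert_of_mem hj)) fun j hj => hb j (mem_insert_of_mem hj)
    calc ‖a i * ∏ j ∈ s, a j - b i * ∏ j ∈ s, b j‖
        = ‖(a i - b i) * ∏ j ∈ s, a j + b i * (∏ j ∈ s, a j - ∏ j ∈ s, b j)‖ := by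
          congr 1; ring
      _ ≤ ‖a i - b i‖ * 1 + 1 * ∑ j ∈ s, ‖a j - b j‖ := by
        refine (norm_add_le _ _).trans (add_le_add ?_ ?_) <;> refine (norm_mul_le _ _).trans ?_
        · gcongr
        · gcongr; exact hb i (mem_insert_self i s)
      _ = _ := by ring

theorem Finset.one_sub_sum_le_prod_one_sub {ι : Type*} (s : Finset ι) {x : ι → ℝ}
    (h0 : ∀ i ∈ s, 0 ≤ x i) (h1 : ∀ i ∈ s, x i ≤ 1) :
    1 - ∑ i ∈ s, x i ≤ ∏ i ∈ s, (1 - x i) := by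
  classical
  induction s using Finset.induction_on with
  | empty => simp
  | insert i s hi ih =>
    rw [prod_insert hi, sum_insert hi]
    have ih' := ih (fun j hj => h0 j (mem_insert_of_mem hj)) fun j hj => h1 j (mem_insert_of_mem hj)
    have hxi0 := h0 i (mem_insert_self i s)
    have hxi1 := h1 i (mem_insert_self i s)
    have hsum : 0 ≤ ∑ j ∈ s, x j := sum_nonneg fun j hj => h0 j (mem_insert_of_mem hj)
    nlinarith [mul_le_mul_of_nonneg_left ih' (sub_nonneg.2 hxi1)]

theorem Finset.sum_div_one_add_sum_le_one_sub_prod {ι : Type*} (s : Finset ι) {x : ι → ℝ}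
    (h0 : ∀ i ∈ s, 0 ≤ x i) (h1 : ∀ i ∈ s, x i ≤ 1) :
    (∑ i ∈ s, x i) / (1 + ∑ i ∈ s, x i) ≤ 1 - ∏ i ∈ s, (1 - x i) := by
  set X := ∑ i ∈ s, x i
  have hX : 0 < 1 + X := by linarith [sum_nonneg h0]
  have hprod : ∏ i ∈ s, (1 - x i) ≤ (Real.exp X)⁻¹ :=
    calc ∏ i ∈ s, (1 - x i) ≤ ∏ i ∈ s, Real.exp (-x i) :=
          prod_le_prod (fun i hi => sub_nonneg.2 (h1 i hi)) fun i _ => Real.one_sub_le_exp_neg _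
      _ = (Real.exp X)⁻¹ := by rw [← Real.exp_sum, ← Real.exp_neg, sum_neg_distrib]
  have hexp : (Real.exp X)⁻¹ ≤ (1 + X)⁻¹ := by
    gcongr; linarith [Real.add_one_le_exp X]
  have : X / (1 + X) = 1 - (1 + X)⁻¹ := by field_simp; ring
  linarith

theorem sum_Icc_one_sub_one_eq_choose_two (m : ℕ) : ∑ j ∈ Icc 1 (m - 1), j = m.choose 2 := by
  rw [Nat.choose_two_right, ← Finset.sum_range_id]
  rcases m with _ | k
  · simp
  · rw [sum_range_succ', add_zero, ← Ico_add_one_right_eq_Icc, sum_Ico_eq_sum_range]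
    simp [add_comm]

/-- The characteristic function at `s` of the geometric law on `{1, 2, …}` with success
probability `p`. -/
noncomputable def geomCharFun (p s : ℝ) : ℂ := p * exp (I * s) / (1 - (1 - p) * exp (I * s))

/-- The characteristic function at `t` of the exponential law with rate `r`. -/
noncomputable def expCharFun (r t : ℝ) : ℂ := r / (r - I * t)

theorem le_norm_ofReal_sub_I_mul (r t : ℝ) : r ≤ ‖(r : ℂ) - I * t‖ := by
  simpa using Complex.re_le_norm ((r : ℂ) - I * t)

theorem sub_le_norm_one_sub_mul_exp_I_mul {q : ℝ} (hq : 0 ≤ q) (s : ℝ) :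
    1 - q ≤ ‖1 - q * exp (I * s)‖ := by
  simpa [norm_exp_I_mul_ofReal, abs_of_nonneg hq] using norm_sub_norm_le (1 : ℂ) (q * exp (I * s))

theorem norm_expCharFun_le_one {r : ℝ} (hr : 0 ≤ r) (t : ℝ) : ‖expCharFun r t‖ ≤ 1 := by
  rw [expCharFun, norm_div, Complex.norm_real, Real.norm_of_nonneg hr]
  exact div_le_one_of_le₀ (le_norm_ofReal_sub_I_mul r t) (norm_nonneg _)

theorem norm_geomCharFun_le_one {p : ℝ} (hp0 : 0 ≤ p) (hp1 : p ≤ 1) (s : ℝ) :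
    ‖geomCharFun p s‖ ≤ 1 := by
  rw [geomCharFun, norm_div, norm_mul, Complex.norm_real, Real.norm_of_nonneg hp0,
    norm_exp_I_mul_ofReal, mul_one]
  refine div_le_one_of_le₀ ?_ (norm_nonneg _)
  simpa using sub_le_norm_one_sub_mul_exp_I_mul (sub_nonneg.2 hp1) s

theorem expCharFun_div (r t : ℝ) {c : ℝ} (hc : c ≠ 0) :
    expCharFun (r / c) (t / c) = expCharFun r t := by
  have hc' : (c : ℂ) ≠ 0 := ofReal_ne_zero.2 hc
  simp only [expCharFun, ofReal_div]
  rw [← mul_div_assoc, ← sub_div, div_div_div_cancel_right₀ hc']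

theorem norm_geomCharFun_sub_expCharFun_le {S p w : ℝ} (hS : 0 < S) (hS1 : S ≤ 1)
    (hp : S / (1 + S) ≤ p) (hpS : p ≤ S) (hw : |w| ≤ 1) :
    ‖geomCharFun p w - expCharFun S w‖ ≤ 4 * w ^ 2 / S + 2 * |w| := by
  set e := exp (I * w)
  have hp0 : 0 ≤ p := le_trans (by positivity) hp
  have hSp : S - p ≤ S ^ 2 := by
    rw [div_le_iff₀ (by linarith)] at hp; nlinarith
  have hden₁ : S / 2 ≤ ‖1 - ((1 - p : ℝ) : ℂ) * e‖ :=
    calc S / 2 ≤ S / (1 + S) := div_le_div_of_nonneg_left hS.le (by linarith) (by linarith)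
      _ ≤ p := hp
      _ ≤ _ := by simpa using sub_le_norm_one_sub_mul_exp_I_mul (q := 1 - p) (by linarith) w
  have hden₂ : S ≤ ‖(S : ℂ) - I * w‖ := le_norm_ofReal_sub_I_mul S w
  have he₁ : ‖e - 1‖ ≤ |w| := by simpa using Real.norm_exp_I_mul_ofReal_sub_one_le (x := w)
  have he₂ : ‖e - 1 - I * w‖ ≤ w ^ 2 := by
    simpa using norm_exp_sub_one_sub_id_le (x := I * w) (by simpa using hw)
  have hdiff : geomCharFun p w - expCharFun S w
      = ((S : ℂ) * (e - 1 - I * w) + I * w * ((S - p : ℝ) : ℂ) - I * w * p * (e - 1)) /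
        ((1 - ((1 - p : ℝ) : ℂ) * e) * ((S : ℂ) - I * w)) := by
    have h₁ : 1 - ((1 - p : ℝ) : ℂ) * e ≠ 0 := norm_pos_iff.1 (by linarith)
    have h₂ : (S : ℂ) - I * w ≠ 0 := norm_pos_iff.1 (by linarith)
    push_cast at h₁ ⊢
    rw [geomCharFun, expCharFun, div_sub_div _ _ h₁ h₂]
    ring
  have hnum : ‖(S : ℂ) * (e - 1 - I * w) + I * w * ((S - p : ℝ) : ℂ) - I * w * p * (e - 1)‖
      ≤ 2 * S * w ^ 2 + |w| * S ^ 2 := by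
    have h₁ : ‖(S : ℂ) * (e - 1 - I * w)‖ ≤ S * w ^ 2 := by
      rw [norm_mul, norm_real, Real.norm_of_nonneg hS.le]; gcongr
    have h₂ : ‖I * w * ((S - p : ℝ) : ℂ)‖ ≤ |w| * S ^ 2 := by
      simp only [norm_mul, norm_I, norm_real, Real.norm_eq_abs, one_mul,
        abs_of_nonneg (sub_nonneg.2 hpS)]
      gcongr
    have h₃ : ‖I * w * p * (e - 1)‖ ≤ |w| * S * |w| := by
      simp only [norm_mul, norm_I, norm_real, Real.norm_eq_abs, one_mul,
        abs_of_nonneg hp0]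
      gcongr
    calc _ ≤ ‖(S : ℂ) * (e - 1 - I * w)‖ + ‖I * w * ((S - p : ℝ) : ℂ)‖
          + ‖I * w * p * (e - 1)‖ := norm_sub_le_of_le (norm_add_le _ _) le_rfl
      _ ≤ 2 * S * w ^ 2 + |w| * S ^ 2 := by nlinarith [sq_abs w]
  rw [hdiff, norm_div, norm_mul]
  calc _ ≤ (2 * S * w ^ 2 + |w| * S ^ 2) / (S / 2 * S) := by gcongr
    _ = 4 * w ^ 2 / S + 2 * |w| := by field_simp; ring

/-- `1 - λ_m`: the probability that `m` independent uniform draws from `n` values are not all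
distinct. -/
noncomputable def collisionProb (n m : ℕ) : ℝ := 1 - ∏ j ∈ Icc 1 (m - 1), (1 - (j : ℝ) / n)

theorem sum_Icc_one_sub_one_div (n m : ℕ) :
    ∑ j ∈ Icc 1 (m - 1), (j : ℝ) / n = m.choose 2 / n := by
  rw [← sum_div, ← Nat.cast_sum, sum_Icc_one_sub_one_eq_choose_two]

section collisionProb

variable {n m : ℕ}

theorem cast_div_le_one_of_mem_Icc (hmn : m ≤ n) {j : ℕ} (hj : j ∈ Icc 1 (m - 1)) :
    (j : ℝ) / n ≤ 1 :=
  div_le_one_of_le₀ (by exact_mod_cast (mem_Icc.1 hj).2.trans (by omega)) (Nat.cast_nonneg n)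

theorem collisionProb_le (hmn : m ≤ n) : collisionProb n m ≤ m.choose 2 / n := by
  rw [collisionProb, ← sum_Icc_one_sub_one_div]
  linarith [one_sub_sum_le_prod_one_sub _ (fun j _ => by positivity)
    fun j => cast_div_le_one_of_mem_Icc hmn]

theorem le_collisionProb (hmn : m ≤ n) :
    (m.choose 2 / n : ℝ) / (1 + m.choose 2 / n) ≤ collisionProb n m := by
  rw [collisionProb, ← sum_Icc_one_sub_one_div]
  exact sum_div_one_add_sum_le_one_sub_prod _ (fun j _ => by positivity)
    fun j => cast_div_le_one_of_mem_Icc hmn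

theorem collisionProb_nonneg (hmn : m ≤ n) : 0 ≤ collisionProb n m :=
  le_trans (by positivity) (le_collisionProb hmn)

theorem collisionProb_le_one (hmn : m ≤ n) : collisionProb n m ≤ 1 := by
  rw [collisionProb, sub_le_self_iff]
  exact prod_nonneg fun j hj => sub_nonneg.2 (cast_div_le_one_of_mem_Icc hmn hj)

end collisionProb

theorem norm_geomCharFun_sub_expCharFun_choose_two_le (t : ℝ) {n m : ℕ} (hm : 2 ≤ m)
    (hmn : (m : ℝ) ^ 2 ≤ n) (ht : |t| ≤ n) :
    ‖geomCharFun (collisionProb n m) (t / n) - expCharFun (m.choose 2) t‖ ≤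
      (4 * t ^ 2 + 2 * |t|) / n := by
  have hC : (1 : ℝ) ≤ m.choose 2 := by exact_mod_cast Nat.choose_pos hm
  have hm2 : (2 : ℝ) ≤ m := by exact_mod_cast hm
  have hn : (0 : ℝ) < n := by nlinarith
  have hCn : (m.choose 2 : ℝ) ≤ n := le_trans (by exact_mod_cast Nat.choose_le_pow m 2) hmn
  have hmn' : m ≤ n := by
    have : (m : ℝ) ≤ n := by nlinarith
    exact_mod_cast this
  rw [← expCharFun_div _ _ hn.ne']
  refine (norm_geomCharFun_sub_expCharFun_le (by positivity) ((div_le_one hn).2 hCn)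
    (le_collisionProb hmn') (collisionProb_le hmn') ?_).trans ?_
  · rw [abs_div, Nat.abs_cast]; exact div_le_one_of_le₀ ht hn.le
  · rw [div_pow, abs_div, Nat.abs_cast, add_div]
    have : 4 * (t ^ 2 / n ^ 2) / (m.choose 2 / n) = 4 * t ^ 2 / n / m.choose 2 := by
      field_simp
    rw [this, mul_div_assoc (2 : ℝ)]
    exact add_le_add (div_le_self (by positivity) hC) le_rfl

theorem norm_prod_geomCharFun_sub_prod_expCharFun_le (t : ℝ) {n N : ℕ} (hN : (N : ℝ) ^ 2 ≤ n)
    (ht : |t| ≤ n) :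
    ‖∏ m ∈ Icc 2 N, geomCharFun (collisionProb n m) (t / n) -
        ∏ m ∈ Icc 2 N, expCharFun (m.choose 2) t‖ ≤ N * ((4 * t ^ 2 + 2 * |t|) / n) := by
  have hsq : ∀ m ∈ Icc 2 N, (m : ℝ) ^ 2 ≤ n := fun m hm =>
    le_trans (by gcongr; exact_mod_cast (mem_Icc.1 hm).2) hN
  have hle : ∀ m ∈ Icc 2 N, m ≤ n := fun m hm => by
    have : ((m ^ 2 : ℕ) : ℝ) ≤ n := by push_cast; exact hsq m hm
    exact (Nat.le_self_pow two_ne_zero m).trans (by exact_mod_cast this)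
  calc _ ≤ ∑ m ∈ Icc 2 N, ‖geomCharFun (collisionProb n m) (t / n) - expCharFun (m.choose 2) t‖ :=
        norm_prod_sub_prod_le_sum _
          (fun m hm => norm_geomCharFun_le_one (collisionProb_nonneg (hle m hm))
            (collisionProb_le_one (hle m hm)) _)
          fun m _ => norm_expCharFun_le_one (Nat.cast_nonneg _) t
    _ ≤ ∑ _m ∈ Icc 2 N, (4 * t ^ 2 + 2 * |t|) / n :=
        sum_le_sum fun m hm =>
          norm_geomCharFun_sub_expCharFun_choose_two_le t (mem_Icc.1 hm).1 (hsq m hm) ht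
    _ ≤ N * ((4 * t ^ 2 + 2 * |t|) / n) := by
        rw [sum_const, nsmul_eq_mul, Nat.card_Icc]
        gcongr
        exact_mod_cast Nat.sub_le_of_le_add (by omega)

theorem tendsto_log_pow_div_natCast (k : ℕ) :
    Tendsto (fun n : ℕ => Real.log n ^ k / n) atTop (nhds 0) := by
  simpa [Function.comp_def] using
    (Real.tendsto_pow_log_div_mul_add_atTop 1 0 k one_ne_zero).comp tendsto_natCast_atTop_atTop

theorem floor_log_log_le_log (n : ℕ) : (⌊Real.log (Real.log n)⌋₊ : ℝ) ≤ Real.log n :=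
  (Nat.cast_le.2 (Nat.floor_le_floor (Real.log_le_self (Real.log_natCast_nonneg n)))).trans
    (Nat.floor_le (Real.log_natCast_nonneg n))

/-- With `ξ_n = ⌊log log n⌋` and `λ_m = ∏_{j=1}^{m-1}(1 - j/n)`, for every fixed real `t`,
`∏_{m=2}^{ξ_n} (1-λ_m)e^{it/n}/(1-λ_m e^{it/n})` tends, as `n → ∞`, to the value
`L` of the convergent infinite product `∏_{m=2}^∞ C(m,2)/(C(m,2)-it)`. -/
theorem stmt14 (t : ℝ) (L : ℂ)
    (hL : Tendsto (fun N : ℕ => ∏ m ∈ Finset.Icc 2 N,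
        ((m.choose 2 : ℂ) / ((m.choose 2 : ℂ) - Complex.I * t))) atTop (nhds L)) :
    Tendsto (fun n : ℕ =>
        ∏ m ∈ Finset.Icc 2 (Nat.floor (Real.log (Real.log n))),
          ((1 - (∏ j ∈ Finset.Icc 1 (m - 1), (1 - (j : ℂ) / n))) *
              Complex.exp (Complex.I * t / n)) /
            (1 - (∏ j ∈ Finset.Icc 1 (m - 1), (1 - (j : ℂ) / n)) *
              Complex.exp (Complex.I * t / n)))
      atTop (nhds L) := by
  have hfactor (n m : ℕ) : geomCharFun (collisionProb n m) (t / n) =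
      ((1 - (∏ j ∈ Icc 1 (m - 1), (1 - (j : ℂ) / n))) * exp (I * t / n)) /
        (1 - (∏ j ∈ Icc 1 (m - 1), (1 - (j : ℂ) / n)) * exp (I * t / n)) := by
    simp [geomCharFun, collisionProb, mul_div_assoc]
  simp only [← hfactor]
  have hξ : Tendsto (fun n : ℕ => ⌊Real.log (Real.log n)⌋₊) atTop atTop :=
    tendsto_nat_floor_atTop.comp <| Real.tendsto_log_atTop.comp <|
      Real.tendsto_log_atTop.comp tendsto_natCast_atTop_atTop
  have hexp : Tendsto (fun n : ℕ => ∏ m ∈ Icc 2 ⌊Real.log (Real.log n)⌋₊,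
      expCharFun (m.choose 2) t) atTop (nhds L) := by
    simpa only [expCharFun, Complex.ofReal_natCast, Function.comp_def] using hL.comp hξ
  have hbound := (tendsto_log_pow_div_natCast 1).const_mul (4 * t ^ 2 + 2 * |t|)
  rw [mul_zero] at hbound
  refine hexp.congr_dist (squeeze_zero' (Eventually.of_forall fun _ => dist_nonneg) ?_ hbound)
  have hsq : ∀ᶠ n : ℕ in atTop, Real.log n ^ 2 ≤ n := by
    filter_upwards [(tendsto_log_pow_div_natCast 2).eventually (eventually_le_nhds one_pos),
      eventually_gt_atTop 0] with n hn hn0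
    rwa [div_le_one (by exact_mod_cast hn0)] at hn
  filter_upwards [hsq, tendsto_natCast_atTop_atTop.eventually_ge_atTop |t|] with n hn ht
  have hξn := floor_log_log_le_log n
  rw [dist_comm, dist_eq_norm]
  refine (norm_prod_geomCharFun_sub_prod_expCharFun_le t ?_ ht).trans ?_
  · exact le_trans (by gcongr) hn
  · calc _ ≤ Real.log n * ((4 * t ^ 2 + 2 * |t|) / n) := by gcongr
      _ = _ := by ring
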